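/- arXiv:2301.06731 — 2 statements merged into one kernel-verified Lean document; each statement's English description precedes it below -/
import Mathlib

section
/- Consider a semiexplicit descriptor system: E = [[Σ, 0],[0, 0]] and A = [[A11, A12],[A21, A22]] in block form with Σ ∈ ℂ^{r×r} Hermitian positive definite and A22 ∈ ℂ^{(n−r)×(n−r)} invertible, C = [C1, C2] ∈ ℂ^{m×n}, and let 𝒜 = Σ^{-1/2}(A11 − A12 A22^{-1} A21)Σ^{-1/2} and 𝒞 = (C1 − C2 A22^{-1} A21)Σ^{-1/2} be the reduced coefficients. Then the descriptor system is behaviorally observable if and only if the reduced standard state-space pair is observable; that is, rank [λE − A; C] = n for all λ ∈ ℂ if and only if rank [λ I_r − 𝒜; 𝒞] = r for all λ ∈ ℂ, where [M; N] denotes the matrix obtained by stacking N below M. -/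
open Matrix
open scoped ComplexOrder

/-! Eliminating with the invertible pivot `A₂₂` (a Schur complement, after moving the output rows
`C` next to the first block row) shows that `[λE - A; C]` has rank `s` plus the rank of
`[λΣ - Ā; C̄]`, where `Ā = A₁₁ - A₁₂A₂₂⁻¹A₂₁` and `C̄ = C₁ - C₂A₂₂⁻¹A₂₁`. Multiplying the
latter by `Σ^{-1/2}` on the right and by `diag(Σ^{-1/2}, I)` on the left turns it into
`[λI - 𝒜; 𝒞]` without changing its rank. So, for every `λ`, the two ranks differ by exactly `s`. -/

theorem Submodule.finrank_prod {K M N : Type*} [Field K] [AddCommGroup M] [AddCommGroup N]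
    [Module K M] [Module K N] [FiniteDimensional K M] [FiniteDimensional K N]
    (p : Submodule K M) (q : Submodule K N) :
    Module.finrank K (p.prod q) = Module.finrank K p + Module.finrank K q := by
  rw [← Module.finrank_prod, ← LinearMap.finrank_range_of_inj (f := p.subtype.prodMap q.subtype)
    (p.injective_subtype.prodMap q.injective_subtype), LinearMap.range_prodMap,
    Submodule.range_subtype, Submodule.range_subtype]

namespace Matrix

open scoped MatrixOrder in
theorem PosSemidef.cfc_sqrt_mul_self {n 𝕜 : Type*} [RCLike 𝕜] [Fintype n] [DecidableEq n]
    {A : Matrix n n 𝕜} (hA : A.PosSemidef) : cfc Real.sqrt A * cfc Real.sqrt A = A := by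
  rw [← cfcₙ_eq_cfc, ← CFC.sqrt_eq_real_sqrt A hA.nonneg, CFC.sqrt_mul_sqrt_self A hA.nonneg]

variable {K : Type*} [Field K] {l m n o p : Type*} [Fintype l] [Fintype m] [Fintype n]
  [Fintype o] [Fintype p]

omit [Fintype l] [Fintype m] in
theorem mulVecLin_fromBlocks_zero (A : Matrix l n K) (D : Matrix m o K) :
    (fromBlocks A 0 0 D).mulVecLin =
      (LinearEquiv.sumArrowLequivProdArrow l m K K).symm.toLinearMap ∘ₗ
        A.mulVecLin.prodMap D.mulVecLin ∘ₗ
          (LinearEquiv.sumArrowLequivProdArrow n o K K).toLinearMap := by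
  ext x (i | i) <;>
    simp [fromBlocks_mulVec, LinearEquiv.sumArrowLequivProdArrow, Equiv.sumArrowEquivProdArrow]

theorem rank_fromBlocks_zero_zero (A : Matrix l n K) (D : Matrix m o K) :
    (fromBlocks A 0 0 D).rank = A.rank + D.rank := by
  rw [rank, mulVecLin_fromBlocks_zero, LinearMap.range_comp, LinearMap.range_comp,
    LinearEquiv.range, Submodule.map_top, LinearEquiv.finrank_map_eq, LinearMap.range_prodMap,
    Submodule.finrank_prod, rank, rank]

theorem rank_fromBlocks_of_isUnit₂₂ [DecidableEq l] [DecidableEq m] [DecidableEq n]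
    (A : Matrix l m K) (B : Matrix l n K) (C : Matrix n m K) (D : Matrix n n K) (hD : IsUnit D) :
    (fromBlocks A B C D).rank = (A - B * D⁻¹ * C).rank + Fintype.card n := by
  have := invertibleOfIsUnitDet D ((isUnit_iff_isUnit_det D).mp hD)
  rw [fromBlocks_eq_of_invertible₂₂, rank_mul_eq_left_of_isUnit_det,
    rank_mul_eq_right_of_isUnit_det, rank_fromBlocks_zero_zero, rank_of_isUnit D hD,
    invOf_eq_nonsing_inv]
  all_goals simp

theorem rank_fromRows_fromBlocks_fromCols [DecidableEq l] [DecidableEq m] [DecidableEq n]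
    [DecidableEq p] (A : Matrix l m K) (B : Matrix l n K) (C : Matrix n m K) (D : Matrix n n K)
    (X : Matrix p m K) (Y : Matrix p n K) (hD : IsUnit D) :
    (fromRows (fromBlocks A B C D) (fromCols X Y)).rank
      = (fromRows (A - B * D⁻¹ * C) (X - Y * D⁻¹ * C)).rank + Fintype.card n := by
  have hperm : fromBlocks (fromRows A X) (fromRows B Y) C D =
      (fromRows (fromBlocks A B C D) (fromCols X Y)).submatrix
        ((Equiv.sumAssoc l p n).trans ((Equiv.sumCongr (Equiv.refl l) (Equiv.sumComm p n)).trans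
          (Equiv.sumAssoc l n p).symm)) (Equiv.refl (m ⊕ n)) := by
    ext ((i | i) | i) (j | j) <;> rfl
  have hschur : fromRows A X - fromRows B Y * D⁻¹ * C =
      fromRows (A - B * D⁻¹ * C) (X - Y * D⁻¹ * C) := by
    ext (i | i) j <;> simp [fromRows_mul]
  rw [← rank_submatrix _ _ (Equiv.refl _), ← hperm, rank_fromBlocks_of_isUnit₂₂ _ _ _ _ hD,
    hschur]

theorem rank_fromRows_mul_mul [DecidableEq m] [DecidableEq n] [DecidableEq p] (P : Matrix m m K)
    (M : Matrix m n K) (N : Matrix p n K) (Q : Matrix n n K) (hP : IsUnit P) (hQ : IsUnit Q) :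
    (fromRows (P * M * Q) (N * Q)).rank = (fromRows M N).rank := by
  have h : fromRows (P * M * Q) (N * Q) =
      fromBlocks P 0 0 (1 : Matrix p p K) * fromRows M N * Q := by
    simp [fromBlocks_mul_fromRows, fromRows_mul]
  rw [h, rank_mul_eq_left_of_isUnit_det _ _ ((isUnit_iff_isUnit_det Q).mp hQ),
    rank_mul_eq_right_of_isUnit_det]
  simpa [det_fromBlocks_zero₁₂] using (isUnit_iff_isUnit_det P).mp hP

theorem rank_fromRows_smul_sub_conj [DecidableEq n] [DecidableEq p] {S E M : Matrix n n K}
    (N : Matrix p n K) (hS : IsUnit S) (hS_sq : S * S = E) (lam : K) :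
    (fromRows (lam • E - M) N).rank = (fromRows (lam • 1 - S⁻¹ * M * S⁻¹) (N * S⁻¹)).rank := by
  have hS_det := (isUnit_iff_isUnit_det S).mp hS
  rw [← rank_fromRows_mul_mul S _ (N * S⁻¹) S hS hS, mul_sub, sub_mul, Matrix.mul_smul,
    Matrix.mul_one, Matrix.smul_mul, hS_sq, Matrix.mul_assoc,
    nonsing_inv_mul_cancel_right _ _ hS_det, mul_nonsing_inv_cancel_left _ _ hS_det,
    nonsing_inv_mul_cancel_right _ _ hS_det]

end Matrix

/-- A semiexplicit descriptor system is behaviorally observable iff the reduced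
standard state-space pair `(𝒜, 𝒞)` is observable. -/
theorem semiexplicit_behavioral_observability
    (r s m : ℕ)
    (Sg : Matrix (Fin r) (Fin r) ℂ) (hSg : Sg.PosDef)
    (A11 : Matrix (Fin r) (Fin r) ℂ) (A12 : Matrix (Fin r) (Fin s) ℂ)
    (A21 : Matrix (Fin s) (Fin r) ℂ) (A22 : Matrix (Fin s) (Fin s) ℂ)
    (hA22 : IsUnit A22)
    (C1 : Matrix (Fin m) (Fin r) ℂ) (C2 : Matrix (Fin m) (Fin s) ℂ)
    (E : Matrix (Fin r ⊕ Fin s) (Fin r ⊕ Fin s) ℂ)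
    (hE : E = Matrix.fromBlocks Sg 0 0 0)
    (A : Matrix (Fin r ⊕ Fin s) (Fin r ⊕ Fin s) ℂ)
    (hA : A = Matrix.fromBlocks A11 A12 A21 A22)
    (C : Matrix (Fin m) (Fin r ⊕ Fin s) ℂ) (hC : C = Matrix.fromCols C1 C2)
    (S : Matrix (Fin r) (Fin r) ℂ) (hS : S = hSg.posSemidef.1.eigenvectorUnitary.1 *
      diagonal ((↑) ∘ Real.sqrt ∘ hSg.posSemidef.1.eigenvalues) *
      (star hSg.posSemidef.1.eigenvectorUnitary : Matrix (Fin r) (Fin r) ℂ))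
    (𝒜 : Matrix (Fin r) (Fin r) ℂ) (h𝒜 : 𝒜 = S⁻¹ * (A11 - A12 * A22⁻¹ * A21) * S⁻¹)
    (𝒞 : Matrix (Fin m) (Fin r) ℂ) (h𝒞 : 𝒞 = (C1 - C2 * A22⁻¹ * A21) * S⁻¹) :
    (∀ lam : ℂ, (Matrix.fromRows (lam • E - A) C).rank = r + s)
    ↔ (∀ lam : ℂ,
        (Matrix.fromRows (lam • (1 : Matrix (Fin r) (Fin r) ℂ) - 𝒜) 𝒞).rank = r) := by
  have hS_sq : S * S = Sg := by
    have hS_cfc : S = cfc Real.sqrt Sg := by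
      rw [hS, hSg.posSemidef.1.cfc_eq]
      rfl
    exact hS_cfc ▸ hSg.posSemidef.cfc_sqrt_mul_self
  have hS_unit : IsUnit S := (isUnit_iff_isUnit_det S).mpr <| isUnit_of_mul_isUnit_left <| by
    rw [← det_mul, hS_sq]
    exact (isUnit_iff_isUnit_det Sg).mp hSg.isUnit
  have hA22_neg_inv : (-A22)⁻¹ = -A22⁻¹ :=
    inv_eq_left_inv (by rw [neg_mul_neg, nonsing_inv_mul _ ((isUnit_iff_isUnit_det _).mp hA22)])
  refine forall_congr' fun lam => ?_
  have hpencil : lam • E - A = fromBlocks (lam • Sg - A11) (-A12) (-A21) (-A22) := by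
    rw [hE, hA]
    ext (i | i) (j | j) <;> simp
  have hschur : (fromRows (lam • E - A) C).rank =
      (fromRows (lam • Sg - (A11 - A12 * A22⁻¹ * A21)) (C1 - C2 * A22⁻¹ * A21)).rank + s := by
    rw [hpencil, hC, rank_fromRows_fromBlocks_fromCols _ _ _ _ _ _ hA22.neg, hA22_neg_inv,
      Fintype.card_fin]
    simp only [Matrix.neg_mul, Matrix.mul_neg, neg_neg, sub_neg_eq_add, sub_add]
  rw [hschur, rank_fromRows_smul_sub_conj _ hS_unit hS_sq, ← h𝒜, ← h𝒞]
  omega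
end

section
/- Let A ∈ ℂ^{n×n}, B ∈ ℂ^{n×m}, C ∈ ℂ^{m×n}, D ∈ ℂ^{m×m} and assume the pair (A, C) is observable, i.e., for every λ ∈ ℂ and every x ∈ ℂ^n, A x = λ x and C x = 0 imply x = 0. Then every Hermitian positive semidefinite solution X of the discrete-time scattering KYP inequality (d-sKYP) with E = I_n is positive definite. -/
/-!
The upper-left block of the d-sKYP inequality is the Stein inequality `AᴴXA + CᴴC ≤ X`.
Evaluating its quadratic form at `x ∈ ker X` gives `(Ax)ᴴX(Ax) + ‖Cx‖² ≤ 0`, so `Cx = 0` and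
`Ax ∈ ker X`. Thus `ker X` is an `A`-invariant subspace of `ker C`; if it were nonzero it would
contain an eigenvector of `A` annihilated by `C`, contradicting observability. A positive
semidefinite matrix with trivial kernel is positive definite.
-/

open Matrix
open scoped ComplexOrder

theorem Module.End.exists_eigenvector_of_le_comap {K V : Type*} [Field K] [IsAlgClosed K]
    [AddCommGroup V] [Module K V] [FiniteDimensional K V] (f : Module.End K V)
    {p : Submodule K V} (hp : p ≠ ⊥) (hf : p ≤ p.comap f) :
    ∃ c : K, ∃ v ∈ p, v ≠ 0 ∧ f v = c • v := by
  have := Submodule.nontrivial_iff_ne_bot.mpr hp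
  obtain ⟨c, hc⟩ := Module.End.exists_eigenvalue (f.restrict hf)
  obtain ⟨v, hv⟩ := hc.exists_hasEigenvector
  exact ⟨c, v, v.2, by simpa using hv.2, congrArg Subtype.val hv.apply_eq_smul⟩

namespace Matrix

theorem PosSemidef.toBlocks₁₁ {R m n : Type*} [Ring R] [PartialOrder R] [StarRing R]
    {M : Matrix (n ⊕ m) (n ⊕ m) R} (hM : M.PosSemidef) : M.toBlocks₁₁.PosSemidef :=
  hM.submatrix Sum.inl

section QuadraticForm

variable {R m n : Type*} [CommSemiring R] [StarRing R] [Fintype m] [Fintype n]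

theorem star_dotProduct_conjTranspose_mul_mulVec (A : Matrix m n R) (x : n → R) :
    star x ⬝ᵥ (Aᴴ * A) *ᵥ x = star (A *ᵥ x) ⬝ᵥ A *ᵥ x := by
  rw [← mulVec_mulVec, dotProduct_mulVec, ← star_mulVec]

theorem star_dotProduct_conjTranspose_mul_mul_mulVec (A : Matrix m n R) (X : Matrix m m R)
    (x : n → R) : star x ⬝ᵥ (Aᴴ * X * A) *ᵥ x = star (A *ᵥ x) ⬝ᵥ X *ᵥ (A *ᵥ x) := by
  rw [← mulVec_mulVec, ← mulVec_mulVec, dotProduct_mulVec, ← star_mulVec]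

end QuadraticForm

section Stein

variable {m n : Type*} [Fintype m] [Fintype n]

theorem mulVec_eq_zero_of_stein_posSemidef {𝕜 : Type*} [RCLike 𝕜] {A : Matrix n n 𝕜}
    {C : Matrix m n 𝕜} {X : Matrix n n 𝕜} (hX : X.PosSemidef)
    (hStein : (X - Aᴴ * X * A - Cᴴ * C).PosSemidef) {x : n → 𝕜} (hx : X *ᵥ x = 0) :
    C *ᵥ x = 0 ∧ X *ᵥ (A *ᵥ x) = 0 := by
  have hA := hX.dotProduct_mulVec_nonneg (A *ᵥ x)
  have hC := dotProduct_star_self_nonneg (C *ᵥ x)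
  have hsum : 0 ≤ -(star (A *ᵥ x) ⬝ᵥ X *ᵥ (A *ᵥ x)) - star (C *ᵥ x) ⬝ᵥ C *ᵥ x := by
    have := hStein.dotProduct_mulVec_nonneg x
    rwa [sub_mulVec, sub_mulVec, dotProduct_sub, dotProduct_sub, hx, dotProduct_zero,
      star_dotProduct_conjTranspose_mul_mul_mulVec, star_dotProduct_conjTranspose_mul_mulVec,
      zero_sub] at this
  refine ⟨dotProduct_star_self_eq_zero.mp ?_, (hX.dotProduct_mulVec_zero_iff _).mp ?_⟩
  · exact le_antisymm (by linear_combination hsum + hA) hC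
  · exact le_antisymm (by linear_combination hsum + hC) hA

theorem ker_mulVecLin_eq_bot_of_stein_posSemidef {A : Matrix n n ℂ} {C : Matrix m n ℂ}
    {X : Matrix n n ℂ} (hobs : ∀ (lam : ℂ) (x : n → ℂ), A *ᵥ x = lam • x → C *ᵥ x = 0 → x = 0)
    (hX : X.PosSemidef) (hStein : (X - Aᴴ * X * A - Cᴴ * C).PosSemidef) :
    LinearMap.ker X.mulVecLin = ⊥ := by
  by_contra hker
  obtain ⟨c, v, hv, hv0, hAv⟩ := Module.End.exists_eigenvector_of_le_comap A.mulVecLin hker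
    fun x hx ↦ (mulVec_eq_zero_of_stein_posSemidef hX hStein hx).2
  exact hv0 (hobs c v hAv (mulVec_eq_zero_of_stein_posSemidef hX hStein hv).1)

end Stein

end Matrix

/-- For an observable pair `(A, C)`, every positive semidefinite solution of the
discrete-time scattering KYP inequality (with `E = I`) is positive definite. -/
theorem observable_dsKYP_solution_posDef
    (n m : ℕ)
    (A : Matrix (Fin n) (Fin n) ℂ)
    (B : Matrix (Fin n) (Fin m) ℂ)
    (C : Matrix (Fin m) (Fin n) ℂ)
    (D : Matrix (Fin m) (Fin m) ℂ)
    (hobs : ∀ (lam : ℂ) (x : Fin n → ℂ), A *ᵥ x = lam • x → C *ᵥ x = 0 → x = 0)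
    (X : Matrix (Fin n) (Fin n) ℂ)
    (hX : X.PosSemidef)
    (hKYP : (Matrix.fromBlocks
        (-(Aᴴ * X * A) + X - Cᴴ * C) (-(Aᴴ * X * B) - Cᴴ * D)
        (-(Dᴴ * C) - Bᴴ * X * A) (1 - Dᴴ * D - Bᴴ * X * B)).PosSemidef) :
    X.PosDef := by
  have hStein : (X - Aᴴ * X * A - Cᴴ * C).PosSemidef := by
    simpa only [toBlocks_fromBlocks₁₁, neg_add_eq_sub] using hKYP.toBlocks₁₁
  have hinj : Function.Injective X.mulVecLin :=
    LinearMap.ker_eq_bot.mp (ker_mulVecLin_eq_bot_of_stein_posSemidef hobs hX hStein)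
  exact hX.posDef_iff_isUnit.mpr (mulVec_injective_iff_isUnit.mp hinj)
end
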